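/- Let f : R^m → R be differentiable, strongly convex with parameter μ > 0, with ∇f Lipschitz continuous with constant L ≥ μ, and minimizer θ*. For step size η ∈ (0, 2/L), the gradient descent iterates θ^{t+1} = θ^t − η∇f(θ^t) satisfy ‖θ^{t+1} − θ*‖ ≤ ρ‖θ^t − θ*‖ where ρ = max{|1 − ημ|, |1 − ηL|} < 1, and hence θ^t → θ* as t → ∞. -/

import Mathlib

/-!
Write `f = h + μ/2 ‖·‖²`. The function `h` is convex and, by the descent lemma, `(L - μ)`-smooth,
so (Baillon–Haddad) its gradient `g - μ • id` is `1/(L - μ)`-cocoercive; equivalently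
`N = 2 (g - μ • id) - (L - μ) • id` is nonexpansive. The gradient step is
`id - η g = (1 - η (μ + L) / 2) • id - (η / 2) • N`, hence Lipschitz with constant
`|1 - η (μ + L) / 2| + η (L - μ) / 2 = max (1 - η μ) (η L - 1)`. As `θ*` is a fixed point of
the step, the iterates converge geometrically.
-/

open RealInnerProductSpace Filter Topology

theorem le_mul_of_forall_quadratic_le {a s M : ℝ} (hM : 0 ≤ M)
    (h : ∀ t, (2 * t - M * t ^ 2) * a ≤ s) : a ≤ M * s := by
  have hs : 0 ≤ s := by simpa using h 0
  have hdisc := discrim_le_zero (a := M * a) (b := -2 * a) (c := s) fun t ↦ by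
    linarith [h t]
  rw [discrim] at hdisc
  nlinarith [mul_nonneg hM hs]

theorem max_abs_one_sub_mul_lt_one {μ L η : ℝ} (hμ : 0 < μ) (hμL : μ ≤ L)
    (hη : η ∈ Set.Ioo 0 (2 / L)) :
    max |1 - η * μ| |1 - η * L| < 1 := by
  obtain ⟨hη0, hηL⟩ := hη
  have hL : 0 < L := hμ.trans_le hμL
  rw [lt_div_iff₀ hL] at hηL
  refine max_lt (abs_lt.2 ⟨?_, ?_⟩) (abs_lt.2 ⟨?_, ?_⟩) <;> nlinarith

theorem tendsto_of_norm_sub_le_mul {E : Type*} [SeminormedAddCommGroup E] {u : ℕ → E} {a : E}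
    {ρ : ℝ} (hρ0 : 0 ≤ ρ) (hρ1 : ρ < 1) (hu : ∀ t, ‖u (t + 1) - a‖ ≤ ρ * ‖u t - a‖) :
    Tendsto u atTop (𝓝 a) := by
  rw [tendsto_iff_norm_sub_tendsto_zero]
  refine squeeze_zero (fun _ ↦ norm_nonneg _)
    (fun t ↦ le_geom (u := fun t ↦ ‖u t - a‖) hρ0 t fun k _ ↦ hu k) ?_
  simpa using (tendsto_pow_atTop_nhds_zero_of_lt_one hρ0 hρ1).mul_const ‖u 0 - a‖

variable {E : Type*} [NormedAddCommGroup E] [InnerProductSpace ℝ E]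

theorem le_add_inner_add_sq_of_lipschitz_gradient [CompleteSpace E] {f : E → ℝ} {g : E → E}
    {L : ℝ} (hf : ∀ x, HasGradientAt f (g x) x) (hg : ∀ x y, ‖g x - g y‖ ≤ L * ‖x - y‖) (x y : E) :
    f y ≤ f x + ⟪g x, y - x⟫ + L / 2 * ‖y - x‖ ^ 2 := by
  set d := y - x
  let φ : ℝ → ℝ := fun t ↦ f (x + t • d) - t * ⟪g x, d⟫ - L / 2 * t ^ 2 * ‖d‖ ^ 2
  let φ' : ℝ → ℝ := fun t ↦ ⟪g (x + t • d), d⟫ - ⟪g x, d⟫ - L * t * ‖d‖ ^ 2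
  have hφ : ∀ t, HasDerivAt φ (φ' t) t := by
    intro t
    have hline : HasDerivAt (fun s : ℝ ↦ x + s • d) d t := by
      simpa using ((hasDerivAt_id t).smul_const d).const_add x
    have hfl := (hf (x + t • d)).hasFDerivAt.comp_hasDerivAt t hline
    simp only [Function.comp_def, InnerProductSpace.toDual_apply_apply] at hfl
    refine ((hfl.sub ((hasDerivAt_id t).mul_const ⟪g x, d⟫)).sub
      (((hasDerivAt_pow 2 t).const_mul (L / 2)).mul_const (‖d‖ ^ 2))).congr_deriv ?_
    simp only [φ']
    ring
  obtain ⟨c, ⟨hc0, -⟩, hc⟩ := exists_hasDerivAt_eq_slope φ φ' zero_lt_one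
    (fun t _ ↦ (hφ t).continuousAt.continuousWithinAt) (fun t _ ↦ hφ t)
  have hφ'c : φ' c ≤ 0 := by
    have hcd : ‖g (x + c • d) - g x‖ ≤ L * (c * ‖d‖) := by
      simpa [norm_smul, abs_of_pos hc0] using hg (x + c • d) x
    calc φ' c = ⟪g (x + c • d) - g x, d⟫ - L * c * ‖d‖ ^ 2 := by
          simp only [φ', inner_sub_left]
      _ ≤ ‖g (x + c • d) - g x‖ * ‖d‖ - L * c * ‖d‖ ^ 2 := by
          gcongr; exact real_inner_le_norm _ _
      _ ≤ L * (c * ‖d‖) * ‖d‖ - L * c * ‖d‖ ^ 2 := by gcongr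
      _ = 0 := by ring
  have hφ10 : φ 1 ≤ φ 0 := by
    rw [sub_zero, div_one] at hc
    linarith
  simp only [φ, zero_smul, add_zero, one_smul, zero_mul, sub_zero, one_mul, one_pow] at hφ10
  rw [show x + d = y by simp [d]] at hφ10
  linarith

theorem norm_sub_sq_le_mul_inner_of_convex_of_smooth {h : E → ℝ} {G : E → E} {M : ℝ}
    (hM : 0 ≤ M) (hconv : ∀ x y, h x + ⟪G x, y - x⟫ ≤ h y)
    (hsmooth : ∀ x y, h y ≤ h x + ⟪G x, y - x⟫ + M / 2 * ‖y - x‖ ^ 2) (x y : E) :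
    ‖G x - G y‖ ^ 2 ≤ M * ⟪G x - G y, x - y⟫ := by
  -- compare `h` at `b - t • (G b - G a)` with its tangent plane at `a` and its upper model at `b`
  have key : ∀ a b : E, ∀ t : ℝ,
      h a + ⟪G a, b - a⟫ + (t - M * t ^ 2 / 2) * ‖G b - G a‖ ^ 2 ≤ h b := by
    intro a b t
    set v := G b - G a
    have h1 := hconv a (b - t • v)
    have h2 := hsmooth b (b - t • v)
    rw [show b - t • v - a = (b - a) - t • v by abel, inner_sub_right,
      real_inner_smul_right] at h1
    rw [show b - t • v - b = -(t • v) by abel, inner_neg_right, real_inner_smul_right,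
      norm_neg, norm_smul, Real.norm_eq_abs, mul_pow, sq_abs] at h2
    have hv : t * ⟪G b, v⟫ - t * ⟪G a, v⟫ = t * ‖v‖ ^ 2 := by
      rw [← mul_sub, ← inner_sub_left, real_inner_self_eq_norm_sq]
    linarith
  refine le_mul_of_forall_quadratic_le hM fun t ↦ ?_
  have k1 := key x y t
  have k2 := key y x t
  rw [norm_sub_rev] at k1
  have hsum : ⟪G x, y - x⟫ + ⟪G y, x - y⟫ = -⟪G x - G y, x - y⟫ := by
    rw [← neg_sub x y, inner_neg_right, inner_sub_left]
    ring
  nlinarith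

theorem norm_two_smul_sub_le_of_sq_le_inner {p w : E} {c : ℝ} (hc : 0 ≤ c)
    (h : ‖p‖ ^ 2 ≤ c * ⟪p, w⟫) : ‖(2 : ℝ) • p - c • w‖ ≤ c * ‖w‖ := by
  refine (pow_le_pow_iff_left₀ (norm_nonneg _) (by positivity) two_ne_zero).1 ?_
  rw [norm_sub_sq_real, norm_smul, norm_smul, real_inner_smul_left, real_inner_smul_right,
    Real.norm_eq_abs, Real.norm_eq_abs, abs_of_nonneg hc, abs_two]
  nlinarith

theorem norm_sub_sq_le_mul_inner_of_strongly_convex_of_smooth {f : E → ℝ} {g : E → E}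
    {μ L : ℝ} (hμL : μ ≤ L) (hsc : ∀ x y, f x + ⟪g x, y - x⟫ + μ / 2 * ‖y - x‖ ^ 2 ≤ f y)
    (hsmooth : ∀ x y, f y ≤ f x + ⟪g x, y - x⟫ + L / 2 * ‖y - x‖ ^ 2) (x y : E) :
    ‖(g x - μ • x) - (g y - μ • y)‖ ^ 2 ≤
      (L - μ) * ⟪(g x - μ • x) - (g y - μ • y), x - y⟫ := by
  have hsq : ∀ x y : E,
      μ / 2 * ‖y‖ ^ 2 = μ / 2 * ‖x‖ ^ 2 + ⟪μ • x, y - x⟫ + μ / 2 * ‖y - x‖ ^ 2 := by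
    intro x y
    rw [real_inner_smul_left, ← sub_add_cancel y x, norm_add_sq_real, add_sub_cancel_right,
      real_inner_comm]
    ring
  refine norm_sub_sq_le_mul_inner_of_convex_of_smooth (h := fun z ↦ f z - μ / 2 * ‖z‖ ^ 2)
    (G := fun z ↦ g z - μ • z) (sub_nonneg.2 hμL) (fun x y ↦ ?_) (fun x y ↦ ?_) x y <;>
  · rw [inner_sub_left]
    linarith [hsc x y, hsmooth x y, hsq x y]

theorem norm_sub_smul_le_of_cocoercive {w v : E} {μ L η : ℝ} (hμL : μ ≤ L) (hη : 0 ≤ η)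
    (hco : ‖v - μ • w‖ ^ 2 ≤ (L - μ) * ⟪v - μ • w, w⟫) :
    ‖w - η • v‖ ≤ max |1 - η * μ| |1 - η * L| * ‖w‖ := by
  have hc : 0 ≤ L - μ := sub_nonneg.2 hμL
  have hN := norm_two_smul_sub_le_of_sq_le_inner hc hco
  have hsplit : w - η • v = (1 - η * (μ + L) / 2) • w
      - (η / 2) • ((2 : ℝ) • (v - μ • w) - (L - μ) • w) := by
    module
  calc ‖w - η • v‖
      ≤ |1 - η * (μ + L) / 2| * ‖w‖ + η / 2 * ((L - μ) * ‖w‖) := by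
        rw [hsplit]
        refine (norm_sub_le _ _).trans ?_
        rw [norm_smul, norm_smul, Real.norm_eq_abs, Real.norm_eq_abs,
          abs_of_nonneg (by positivity : 0 ≤ η / 2)]
        gcongr
    _ ≤ max |1 - η * μ| |1 - η * L| * ‖w‖ := by
        rw [← mul_assoc, ← add_mul]
        gcongr
        rcases abs_cases (1 - η * (μ + L) / 2) with ⟨habs, -⟩ | ⟨habs, -⟩ <;> rw [habs]
        · exact le_max_of_le_left (by linarith [le_abs_self (1 - η * μ)])
        · exact le_max_of_le_right (by linarith [neg_le_abs (1 - η * L)])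

theorem stmt_8_general {m : ℕ} (f : EuclideanSpace ℝ (Fin m) → ℝ)
    (g : EuclideanSpace ℝ (Fin m) → EuclideanSpace ℝ (Fin m))
    (hdiff : ∀ x, HasGradientAt f (g x) x)
    (μ L : ℝ) (hμ : 0 < μ) (hμL : μ ≤ L)
    (hsc : ∀ x y, f y ≥ f x + ⟪g x, y - x⟫ + (μ / 2) * ‖y - x‖ ^ 2)
    (hlip : ∀ x y, ‖g x - g y‖ ≤ L * ‖x - y‖)
    (θstar : EuclideanSpace ℝ (Fin m))
    (hgrad : g θstar = 0)
    (η : ℝ) (hη : η ∈ Set.Ioo (0 : ℝ) (2 / L))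
    (θ : ℕ → EuclideanSpace ℝ (Fin m))
    (hiter : ∀ t, θ (t + 1) = θ t - η • g (θ t)) :
    (∀ t, ‖θ (t + 1) - θstar‖ ≤ max |1 - η * μ| |1 - η * L| * ‖θ t - θstar‖) ∧
      max |1 - η * μ| |1 - η * L| < 1 ∧
      Tendsto θ atTop (nhds θstar) := by
  have hco := norm_sub_sq_le_mul_inner_of_strongly_convex_of_smooth hμL hsc
    (le_add_inner_add_sq_of_lipschitz_gradient hdiff hlip)
  have hcontr : ∀ t, ‖θ (t + 1) - θstar‖ ≤ max |1 - η * μ| |1 - η * L| * ‖θ t - θstar‖ := by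
    intro t
    have hstep : θ (t + 1) - θstar = (θ t - θstar) - η • (g (θ t) - g θstar) := by
      rw [hiter, hgrad]
      module
    rw [hstep]
    refine norm_sub_smul_le_of_cocoercive hμL hη.1.le ?_
    simpa only [smul_sub, sub_sub_sub_comm] using hco (θ t) θstar
  have hρ1 := max_abs_one_sub_mul_lt_one hμ hμL hη
  exact ⟨hcontr, hρ1, tendsto_of_norm_sub_le_mul (by positivity) hρ1 hcontr⟩

/-- Gradient descent on a `μ`-strongly convex function with `L`-Lipschitz gradient
and step size `η ∈ (0, 2/L)` contracts with rate `ρ = max |1-ημ| |1-ηL| < 1`,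
hence converges to the minimizer `θ*`. -/
theorem stmt_8 {m : ℕ} (f : EuclideanSpace ℝ (Fin m) → ℝ)
    (g : EuclideanSpace ℝ (Fin m) → EuclideanSpace ℝ (Fin m))
    (hdiff : ∀ x, HasGradientAt f (g x) x)
    (μ L : ℝ) (hμ : 0 < μ) (hμL : μ ≤ L)
    (hsc : ∀ x y, f y ≥ f x + ⟪g x, y - x⟫ + (μ / 2) * ‖y - x‖ ^ 2)
    (hlip : ∀ x y, ‖g x - g y‖ ≤ L * ‖x - y‖)
    (θstar : EuclideanSpace ℝ (Fin m)) (hmin : ∀ θ, f θstar ≤ f θ)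
    (hgrad : g θstar = 0)
    (η : ℝ) (hη : η ∈ Set.Ioo (0 : ℝ) (2 / L))
    (θ : ℕ → EuclideanSpace ℝ (Fin m))
    (hiter : ∀ t, θ (t + 1) = θ t - η • g (θ t)) :
    (∀ t, ‖θ (t + 1) - θstar‖ ≤ max |1 - η * μ| |1 - η * L| * ‖θ t - θstar‖) ∧
      max |1 - η * μ| |1 - η * L| < 1 ∧
      Tendsto θ atTop (nhds θstar) :=
  stmt_8_general f g hdiff μ L hμ hμL hsc hlip θstar hgrad η hη θ hiter
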